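/- The Lovász extension of a submodular function f with f(∅) = 0 is convex: for w₁, w₂ ∈ ℝ≥0^E and λ ∈ [0,1], L_f(λ w₁ + (1−λ) w₂) ≤ λ L_f(w₁) + (1−λ) L_f(w₂). -/

import Mathlib

/-!
On nonnegative vectors the Lovász extension is the support function of the submodular
polyhedron `P(f) = {x | ∀ A, x(A) ≤ f A}`. If `x ∈ P(f)` and `u ≥ 0`, the layer-cake formula gives
`⟨x, u⟩ = ∫₀^∞ x({u ≥ t}) dt ≤ ∫₀^∞ f({u ≥ t}) dt = L_f(u)`, and Edmonds' greedy vector for `u`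
lies in `P(f)` and is tight on every superlevel set of `u`, so it attains equality. Taking the
greedy vector `x` of `λ w₁ + (1 - λ) w₂` therefore gives
`L_f(λ w₁ + (1 - λ) w₂) = λ ⟨x, w₁⟩ + (1 - λ) ⟨x, w₂⟩ ≤ λ L_f(w₁) + (1 - λ) L_f(w₂)`.
-/

open Finset MeasureTheory

variable {E : Type*} [Fintype E] [DecidableEq E]

open Classical in
noncomputable def lovasz (f : Finset E → ℝ) (w : E → ℝ) : ℝ :=
  ∫ t in Set.Ioi (0 : ℝ), f (Finset.univ.filter (fun e => t ≤ w e))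

theorem integrableOn_Ioi_indicator_Iic (a c : ℝ) :
    IntegrableOn ((Set.Iic a).indicator fun _ => c) (Set.Ioi 0) := by
  rw [integrableOn_indicator_iff measurableSet_Iic, Set.inter_comm, Set.Ioi_inter_Iic]
  exact integrableOn_const measure_Ioc_lt_top.ne

theorem integral_Ioi_indicator_Iic {a : ℝ} (ha : 0 ≤ a) (c : ℝ) :
    ∫ t in Set.Ioi 0, (Set.Iic a).indicator (fun _ => c) t = a * c := by
  rw [setIntegral_indicator measurableSet_Iic, Set.Ioi_inter_Iic, setIntegral_const,
    Real.volume_real_Ioc_of_le ha, sub_zero, smul_eq_mul]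

section Superlevel

variable {E : Type*} [Fintype E]

theorem sum_superlevel_eq_sum_indicator (x u : E → ℝ) (t : ℝ) :
    ∑ e ∈ univ.filter (fun e => t ≤ u e), x e =
      ∑ e, (Set.Iic (u e)).indicator (fun _ => x e) t := by
  simp only [Finset.sum_filter, Set.indicator_apply, Set.mem_Iic]

theorem integrableOn_Ioi_sum_superlevel (x u : E → ℝ) :
    IntegrableOn (fun t => ∑ e ∈ univ.filter (fun e => t ≤ u e), x e) (Set.Ioi 0) := by
  simp only [sum_superlevel_eq_sum_indicator]
  exact integrable_finsetSum _ fun e _ => integrableOn_Ioi_indicator_Iic (u e) (x e)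

theorem integral_Ioi_sum_superlevel (x : E → ℝ) {u : E → ℝ} (hu : ∀ e, 0 ≤ u e) :
    ∫ t in Set.Ioi 0, ∑ e ∈ univ.filter (fun e => t ≤ u e), x e = ∑ e, x e * u e := by
  simp only [sum_superlevel_eq_sum_indicator]
  rw [integral_finsetSum _ fun e _ => integrableOn_Ioi_indicator_Iic (u e) (x e)]
  exact Finset.sum_congr rfl fun e _ => by rw [integral_Ioi_indicator_Iic (hu e), mul_comm]

theorem lovasz_eq_sum_mul {f : Finset E → ℝ} {x u : E → ℝ}
    (hx : ∀ t : ℝ, ∑ e ∈ univ.filter (fun e => t ≤ u e), x e = f (univ.filter fun e => t ≤ u e))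
    (hu : ∀ e, 0 ≤ u e) :
    lovasz f u = ∑ e, x e * u e := by
  rw [lovasz]
  simp_rw [← hx]
  exact integral_Ioi_sum_superlevel x hu

end Superlevel

section Greedy

variable {E : Type*} [DecidableEq E] {f : Finset E → ℝ}

theorem sum_update_marginal_le (hsub : ∀ A B : Finset E, f (A ∪ B) + f (A ∩ B) ≤ f A + f B)
    {S : Finset E} {a : E} (ha : a ∉ S) {x : E → ℝ} (hx : ∀ A ⊆ S, ∑ e ∈ A, x e ≤ f A)
    {A : Finset E} (hA : A ⊆ insert a S) :
    ∑ e ∈ A, Function.update x a (f (insert a S) - f S) e ≤ f A := by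
  by_cases haA : a ∈ A
  · have hAerase : A.erase a ⊆ S := fun e he => by
      obtain ⟨hne, heA⟩ := Finset.mem_erase.mp he
      exact (Finset.mem_insert.mp (hA heA)).resolve_left hne
    have hunion : A ∪ S = insert a S := by
      rw [← Finset.insert_erase haA, Finset.insert_union, Finset.union_eq_right.mpr hAerase]
    have hinter : A ∩ S = A.erase a := by
      conv_lhs => rw [← Finset.insert_erase haA]
      rw [Finset.insert_inter_of_notMem ha, Finset.inter_eq_left.mpr hAerase]
    have := hsub A S
    rw [hunion, hinter] at this
    rw [← Finset.add_sum_erase _ _ haA, Function.update_self,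
      Finset.sum_update_of_notMem (Finset.notMem_erase a A)]
    linarith [hx _ hAerase]
  · have hAS : A ⊆ S := fun e he =>
      (Finset.mem_insert.mp (hA he)).resolve_left (ne_of_mem_of_not_mem he haA)
    rw [Finset.sum_update_of_notMem haA]
    exact hx A hAS

/-- Edmonds' greedy vector: list `S` by decreasing `w` and give each element its marginal value
over the elements listed before it. -/
theorem exists_greedy_vector (hsub : ∀ A B : Finset E, f (A ∪ B) + f (A ∩ B) ≤ f A + f B)
    (h0 : f ∅ = 0) (w : E → ℝ) (S : Finset E) :
    ∃ x : E → ℝ, (∀ A ⊆ S, ∑ e ∈ A, x e ≤ f A) ∧ ∑ e ∈ S, x e = f S ∧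
      ∀ t : ℝ, ∑ e ∈ S.filter (fun e => t ≤ w e), x e = f (S.filter fun e => t ≤ w e) := by
  induction S using Finset.induction_on_min_value w with
  | empty =>
    exact ⟨0, fun A hA => by simp [Finset.subset_empty.mp hA, h0], by simp [h0], by simp [h0]⟩
  | insert a S ha hmin ih =>
    obtain ⟨x, hfeas, hsum, hlevel⟩ := ih
    have htotal : ∑ e ∈ insert a S, Function.update x a (f (insert a S) - f S) e
        = f (insert a S) := by
      rw [Finset.sum_insert ha, Function.update_self, Finset.sum_update_of_notMem ha, hsum]
      ring
    refine ⟨_, fun A hA => sum_update_marginal_le hsub ha hfeas hA, htotal, fun t => ?_⟩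
    by_cases hta : t ≤ w a
    · rw [Finset.filter_true_of_mem fun e he => ?_]
      · exact htotal
      · rcases Finset.mem_insert.mp he with rfl | he
        exacts [hta, hta.trans (hmin e he)]
    · rw [Finset.filter_insert, if_neg hta,
        Finset.sum_update_of_notMem fun h => ha (Finset.mem_filter.mp h).1, hlevel]

end Greedy

theorem sum_mul_le_lovasz {f : Finset E → ℝ}
    (hsub : ∀ A B : Finset E, f (A ∪ B) + f (A ∩ B) ≤ f A + f B) (h0 : f ∅ = 0)
    {x u : E → ℝ} (hx : ∀ A : Finset E, ∑ e ∈ A, x e ≤ f A) (hu : ∀ e, 0 ≤ u e) :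
    ∑ e, x e * u e ≤ lovasz f u := by
  obtain ⟨y, -, -, hy⟩ := exists_greedy_vector hsub h0 u univ
  rw [lovasz_eq_sum_mul hy hu, ← integral_Ioi_sum_superlevel x hu,
    ← integral_Ioi_sum_superlevel y hu]
  exact setIntegral_mono (integrableOn_Ioi_sum_superlevel x u)
    (integrableOn_Ioi_sum_superlevel y u) fun t => (hy t).symm ▸ hx _

theorem lovasz_convex (f : Finset E → ℝ) (w₁ w₂ : E → ℝ) (lam : ℝ)
    (hsub : ∀ A B : Finset E, f (A ∪ B) + f (A ∩ B) ≤ f A + f B)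
    (h0 : f ∅ = 0) (hw₁ : ∀ e, 0 ≤ w₁ e) (hw₂ : ∀ e, 0 ≤ w₂ e)
    (hlam0 : 0 ≤ lam) (hlam1 : lam ≤ 1) :
    lovasz f (fun e => lam * w₁ e + (1 - lam) * w₂ e) ≤
      lam * lovasz f w₁ + (1 - lam) * lovasz f w₂ := by
  have hlam1c : 0 ≤ 1 - lam := sub_nonneg.mpr hlam1
  have hw : ∀ e, 0 ≤ lam * w₁ e + (1 - lam) * w₂ e := fun e =>
    add_nonneg (mul_nonneg hlam0 (hw₁ e)) (mul_nonneg hlam1c (hw₂ e))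
  obtain ⟨x, hx, -, hexact⟩ := exists_greedy_vector hsub h0
    (fun e => lam * w₁ e + (1 - lam) * w₂ e) univ
  have hx' : ∀ A : Finset E, ∑ e ∈ A, x e ≤ f A := fun A => hx A (subset_univ A)
  calc lovasz f (fun e => lam * w₁ e + (1 - lam) * w₂ e)
      = ∑ e, x e * (lam * w₁ e + (1 - lam) * w₂ e) := lovasz_eq_sum_mul hexact hw
    _ = lam * ∑ e, x e * w₁ e + (1 - lam) * ∑ e, x e * w₂ e := by
      simp only [mul_sum, ← sum_add_distrib]
      exact sum_congr rfl fun e _ => by ring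
    _ ≤ lam * lovasz f w₁ + (1 - lam) * lovasz f w₂ := by
      gcongr
      exacts [sum_mul_le_lovasz hsub h0 hx' hw₁, sum_mul_le_lovasz hsub h0 hx' hw₂]
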